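/- arXiv:1712.06033 — 3 statements merged into one kernel-verified Lean document; each statement's English description precedes it below -/
import Mathlib

section
/- Let h : Q → P be a contraction morphism of positive opetopes, k ≥ 0, q ∈ Q_{k+2} a 2-collapsing face (i.e. h(q) ∈ P_k), and q' ∈ δ(q) with h(q') ∈ P_k. Then h(q') = h(γ(q)). -/
open scoped Classical

structure PHg where
  Face : ℕ → Type
  fin : ∀ k, Finite (Face k)
  γ : ∀ k, Face (k+1) → Face k
  δ : ∀ k, Face (k+1) → Face k → Prop
  δ_total : ∀ k a, ∃ x, δ k a x
  δ0_fun : ∀ (a : Face 1) (x y : Face 0), δ 0 a x → δ 0 a y → x = y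
  bounded : ∃ n, ∀ k, n < k → IsEmpty (Face k)

abbrev PHg.FaceS (S : PHg) : Type := Σ k, S.Face k

/-- The codomain operation, viewed on faces of arbitrary dimension
(identity in dimension 0). -/
def gammaS (S : PHg) : S.FaceS → S.FaceS
  | ⟨0, x⟩ => ⟨0, x⟩
  | ⟨k+1, x⟩ => ⟨k, S.γ k x⟩

/-- `x ∈ δ(q)`. -/
def inDelta (S : PHg) (x q : S.FaceS) : Prop :=
  match q with
  | ⟨0, _⟩ => False
  | ⟨k+1, a⟩ => ∃ h : x.1 = k, S.δ k a (h ▸ x.2)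

/-- `x = γ(q)` (for `q` of positive dimension). -/
def inGammaS (S : PHg) (x q : S.FaceS) : Prop := 0 < q.1 ∧ gammaS S q = x

/-- `x ∈ ∂(q) = {γ(q)} ∪ δ(q)`. -/
def inBoundary (S : PHg) (x q : S.FaceS) : Prop := inGammaS S x q ∨ inDelta S x q

def covPlus (S : PHg) (a b : S.FaceS) : Prop :=
  ∃ α, inDelta S a α ∧ gammaS S α = b

/-- The upper order `<⁺`. -/
def ltPlus (S : PHg) : S.FaceS → S.FaceS → Prop := Relation.TransGen (covPlus S)

def lePlus (S : PHg) (a b : S.FaceS) : Prop := a = b ∨ ltPlus S a b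

def perpPlus (S : PHg) (a b : S.FaceS) : Prop := ltPlus S a b ∨ ltPlus S b a

def covMinus (S : PHg) (a b : S.FaceS) : Prop := 0 < a.1 ∧ inDelta S (gammaS S a) b

/-- The lower order `<⁻`. -/
def ltMinus (S : PHg) : S.FaceS → S.FaceS → Prop := Relation.TransGen (covMinus S)

def perpMinus (S : PHg) (a b : S.FaceS) : Prop := ltMinus S a b ∨ ltMinus S b a

/-- Iterated codomain `γ^{(k)}`. -/
def gammaIter (S : PHg) (k : ℕ) (p : S.FaceS) : S.FaceS := (gammaS S)^[p.1 - k] p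

/-- `X` is a `<⁺`-interval. -/
def IntervalPlus (S : PHg) (X : Set S.FaceS) : Prop :=
  X = ∅ ∨ ∃ x0 x1, lePlus S x0 x1 ∧ X = {x | lePlus S x0 x ∧ lePlus S x x1}

def hasDim (S : PHg) (n : ℕ) : Prop :=
  Nonempty (S.Face n) ∧ ∀ k, n < k → IsEmpty (S.Face k)

/-- A positive opetope: a nonempty positive hypergraph satisfying globularity,
strictness, disjointness, pencil linearity, and having at most one face outside
`δ(S_{k+1})` in each dimension. -/
structure IsOpetope (S : PHg) : Prop where
  ne : Nonempty (S.Face 0)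
  glob_gamma : ∀ a : S.FaceS, 2 ≤ a.1 →
    ({gammaS S (gammaS S a)} : Set S.FaceS) =
      {x | ∃ y, inDelta S y a ∧ gammaS S y = x} \ {x | ∃ y, inDelta S y a ∧ inDelta S x y}
  glob_delta : ∀ a : S.FaceS, 2 ≤ a.1 →
    {x | inDelta S x (gammaS S a)} =
      {x | ∃ y, inDelta S y a ∧ inDelta S x y} \ {x | ∃ y, inDelta S y a ∧ gammaS S y = x}
  strict : ∀ a, ¬ ltPlus S a a
  linear0 : ∀ a b : S.FaceS, a.1 = 0 → b.1 = 0 → a = b ∨ perpPlus S a b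
  disj : ∀ a b : S.FaceS, 0 < a.1 → ¬ (perpMinus S a b ∧ perpPlus S a b)
  pencil_gamma : ∀ x a b, inGammaS S x a → inGammaS S x b → a = b ∨ perpPlus S a b
  pencil_delta : ∀ x a b, inDelta S x a → inDelta S x b → a = b ∨ perpPlus S a b
  size_le_one : ∀ k (a b : S.Face k),
    (¬ ∃ α : S.Face (k+1), S.δ k α a) → (¬ ∃ α : S.Face (k+1), S.δ k α b) → a = b
/-- A contraction morphism (`ι`-map) of positive opetopes. -/
structure IotaMap (Q P : PHg) where
  f : Q.FaceS → P.FaceS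
  dim_le : ∀ q, (f q).1 ≤ q.1
  gamma_pres : ∀ (k : ℕ) (q : Q.FaceS), f (gammaIter Q k q) = gammaIter P k (f q)
  dom_eq : ∀ q : Q.FaceS, 0 < q.1 → (f q).1 = q.1 →
      (∀ x, inDelta Q x q → (f x).1 = x.1 → inDelta P (f x) (f q)) ∧
      (∀ x y, inDelta Q x q → (f x).1 = x.1 → inDelta Q y q → (f y).1 = y.1 →
        f x = f y → x = y) ∧
      (∀ z, inDelta P z (f q) → ∃ x, inDelta Q x q ∧ (f x).1 = x.1 ∧ f x = z)
  dom_one : ∀ q : Q.FaceS, (f q).1 + 1 = q.1 →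
      (∀ x, inDelta Q x q → (f x).1 = x.1 → f x = f q) ∧
      (∃! x, inDelta Q x q ∧ (f x).1 = x.1)
  dom_more : ∀ q : Q.FaceS, (f q).1 + 2 ≤ q.1 → ∀ x, inDelta Q x q → (f x).1 < x.1

/-!
Since `h` preserves iterated codomains, `h(γ q) = h(q)`, so it suffices to show `h(y) = h(q)`
for every `y ∈ δ(q)` with `h(y) ∈ P_k`. Then `h(γ y) = h(y)`, and by globularity either
`γ y = γγ q`, whose image is `h(q)`, or `γ y ∈ δ(z)` for some `z ∈ δ(q)`. In the latter case `z`
collapses (as `q` collapses twice) while `γ y` does not, which forces `h(z) = h(γ y)`; since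
`γ y <⁺ γ z`, induction along the well-founded order `>⁺` applies to `z`.
-/

lemma PHg.finite_faceS (S : PHg) : Finite S.FaceS := by
  obtain ⟨n, hn⟩ := S.bounded
  have := S.fin
  have hlt : ∀ x : S.FaceS, x.1 < n + 1 := fun x =>
    Nat.lt_succ_of_le (not_lt.mp fun hx => (hn x.1 hx).false x.2)
  refine Finite.of_injective
    (fun x : S.FaceS => (⟨⟨x.1, hlt x⟩, x.2⟩ : Σ i : Fin (n + 1), S.Face i)) ?_
  rintro ⟨a, x⟩ ⟨b, y⟩ hxy
  obtain ⟨hab, hxy⟩ := Sigma.mk.inj_iff.mp hxy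
  obtain rfl : a = b := congrArg Fin.val hab
  cases eq_of_heq hxy
  rfl

lemma wellFounded_flip_ltPlus (S : PHg) (hstrict : ∀ a, ¬ ltPlus S a a) :
    WellFounded (flip (ltPlus S)) := by
  have := S.finite_faceS
  have : IsTrans S.FaceS (flip (ltPlus S)) := ⟨fun _ _ _ h₁ h₂ => h₂.trans h₁⟩
  have : Std.Irrefl (flip (ltPlus S)) := ⟨hstrict⟩
  exact Finite.wellFounded_of_trans_of_irrefl _

lemma fst_add_one_of_inDelta (S : PHg) {x p : S.FaceS} (hx : inDelta S x p) : x.1 + 1 = p.1 := by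
  obtain ⟨_ | m, a⟩ := p
  · exact hx.elim
  · obtain ⟨hd, _⟩ := hx
    simp [hd]

lemma gammaS_fst (S : PHg) (p : S.FaceS) : (gammaS S p).1 = p.1 - 1 := by
  obtain ⟨_ | m, a⟩ := p <;> rfl

lemma IsOpetope.gammaS_eq_of_forall_not_inDelta {S : PHg} (hS : IsOpetope S)
    {q y : S.FaceS} (hq : 2 ≤ q.1) (hy : inDelta S y q)
    (hγy : ¬ ∃ z, inDelta S z q ∧ inDelta S (gammaS S y) z) :
    gammaS S y = gammaS S (gammaS S q) :=
  (Set.ext_iff.mp (hS.glob_gamma q hq) _).mpr ⟨⟨y, hy, rfl⟩, hγy⟩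

namespace IotaMap

variable {Q P : PHg} (h : IotaMap Q P)

lemma map_iterate_gammaS {k n : ℕ} {p : Q.FaceS} (hp : p.1 = k + n) (hfp : (h.f p).1 ≤ k) :
    h.f ((gammaS Q)^[n] p) = h.f p := by
  have := h.gamma_pres k p
  rwa [gammaIter, gammaIter, hp, Nat.add_sub_cancel_left, Nat.sub_eq_zero_of_le hfp,
    Function.iterate_zero_apply] at this

lemma map_eq_of_inDelta {x z : Q.FaceS} (hz : (h.f z).1 < z.1) (hxz : inDelta Q x z)
    (hx : (h.f x).1 = x.1) : h.f x = h.f z := by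
  have hz₁ : (h.f z).1 + 1 = z.1 := by
    by_contra hne
    have := h.dom_more z (by omega) x hxz
    omega
  exact (h.dom_one z hz₁).1 x hxz hx

lemma map_eq_of_inDelta_of_two_collapsing (hQ : IsOpetope Q) {k : ℕ} {q : Q.FaceS}
    (hq : q.1 = k + 2) (hfq : (h.f q).1 = k) {y : Q.FaceS} (hy : inDelta Q y q)
    (hfy : (h.f y).1 = k) : h.f y = h.f q := by
  induction y using (InvImage.wf (gammaS Q) (wellFounded_flip_ltPlus Q hQ.strict)).induction with
  | h y ih =>
    have hy₁ : y.1 = k + 1 := by have := fst_add_one_of_inDelta Q hy; omega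
    have hγy : h.f (gammaS Q y) = h.f y := h.map_iterate_gammaS (n := 1) hy₁ hfy.le
    by_cases hγy_mem : ∃ z, inDelta Q z q ∧ inDelta Q (gammaS Q y) z
    · obtain ⟨z, hz, hγyz⟩ := hγy_mem
      have hγy_z : h.f (gammaS Q y) = h.f z :=
        h.map_eq_of_inDelta (h.dom_more q (by omega) z hz) hγyz
          (by rw [hγy, hfy, gammaS_fst]; omega)
      have hfz : (h.f z).1 = k := by rw [← hγy_z, hγy, hfy]
      rw [← hγy, hγy_z]
      exact ih z (.single ⟨z, hγyz, rfl⟩) hz hfz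
    · rw [← hγy, hQ.gammaS_eq_of_forall_not_inDelta (by omega) hy hγy_mem]
      exact h.map_iterate_gammaS (n := 2) hq hfq.le

end IotaMap

theorem two_collapsing_delta_general
    (Q P : PHg) (hQ : IsOpetope Q) (h : IotaMap Q P)
    (k : ℕ) (q q' : Q.FaceS)
    (hq : q.1 = k + 2) (hcol : (h.f q).1 = k)
    (hq' : inDelta Q q' q) (hcol' : (h.f q').1 = k) :
    h.f q' = h.f (gammaS Q q) := by
  have hγq : h.f (gammaS Q q) = h.f q :=
    h.map_iterate_gammaS (n := 1) (k := k + 1) hq (by omega)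
  rw [hγq]
  exact h.map_eq_of_inDelta_of_two_collapsing hQ hq hcol hq' hcol'

/-- If `q ∈ Q_{k+2}` is 2-collapsing and `q' ∈ δ(q)` is 1-collapsing
(i.e. `h(q') ∈ P_k`), then `h(q') = h(γ(q))`. -/
theorem two_collapsing_delta
    (Q P : PHg) (hQ : IsOpetope Q) (hP : IsOpetope P) (h : IotaMap Q P)
    (k : ℕ) (q q' : Q.FaceS)
    (hq : q.1 = k + 2) (hcol : (h.f q).1 = k)
    (hq' : inDelta Q q' q) (hcol' : (h.f q').1 = k) :
    h.f q' = h.f (gammaS Q q) :=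
  two_collapsing_delta_general Q P hQ h k q q' hq hcol hq' hcol'
end

section
/- Let h : Q → P be a contraction morphism of positive opetopes. For every face q of Q, the set-theoretic image under h of the sub-opetope Q[q] generated by q equals the sub-opetope P[h(q)] generated by h(q). -/
open scoped Classical

/-- The least sub-hypergraph of `S` containing the face `q`
(closed under `γ` and `δ`), i.e. `S[q]`. -/
inductive InGen (S : PHg) (q : S.FaceS) : S.FaceS → Prop
  | base : InGen S q q
  | gam {x : S.FaceS} : InGen S q x → 0 < x.1 → InGen S q (gammaS S x)
  | del {x y : S.FaceS} : InGen S q x → inDelta S y x → InGen S q y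

/-! Both inclusions are proved by induction on the generation of the sub-hypergraphs.
`h(Q[q])` is closed under `γ` because `h` preserves iterated codomains, and under `δ` because
`h` maps the face `γ^{(dim h x)} x` onto `h x` without dropping dimension, so the surjectivity
half of the domain condition applies to it.

For `h(Q[q]) ⊆ P[h q]` the delicate case is a face `y ∈ δ x` whose dimension drops under `h`:
then `h y = h (γ y)`, and by globularity either `γ y = γ γ x`, whose image is an iterated codomain
of `h x`, or `γ y ∈ δ w` for some `w ∈ δ x` with `y <⁻ w`. The latter is handled by a nested
induction on `dim x` and along `<⁻`, which is well founded since `Q` is finite and `<⁻` maps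
into the strict order `<⁺` under `γ`. -/

section Faces

variable {S : PHg}

lemma gammaS_dim (x : S.FaceS) : (gammaS S x).1 = x.1 - 1 := by
  rcases x with ⟨_ | k, a⟩ <;> rfl

lemma iterate_gammaS_dim (x : S.FaceS) (m : ℕ) : ((gammaS S)^[m] x).1 = x.1 - m := by
  induction m with
  | zero => rfl
  | succ m ih => rw [Function.iterate_succ_apply', gammaS_dim, ih]; omega

lemma gammaIter_dim {k : ℕ} {x : S.FaceS} (hk : k ≤ x.1) : (gammaIter S k x).1 = k := by
  rw [gammaIter, iterate_gammaS_dim]; omega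

lemma gammaIter_of_dim_le {k : ℕ} {x : S.FaceS} (hk : x.1 ≤ k) : gammaIter S k x = x := by
  rw [gammaIter, Nat.sub_eq_zero_of_le hk, Function.iterate_zero_apply]

lemma iterate_gammaS_eq_gammaIter {m : ℕ} {x : S.FaceS} (hm : m ≤ x.1) :
    (gammaS S)^[m] x = gammaIter S (x.1 - m) x := by
  rw [gammaIter, Nat.sub_sub_self hm]

lemma inDelta_dim {y x : S.FaceS} (h : inDelta S y x) : y.1 + 1 = x.1 := by
  rcases x with ⟨_ | k, a⟩
  · exact h.elim
  · obtain ⟨rfl, -⟩ := h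
    rfl

lemma InGen.gammaS {s x : S.FaceS} (h : InGen S s x) : InGen S s (gammaS S x) := by
  rcases x with ⟨_ | k, a⟩
  · exact h
  · exact h.gam k.succ_pos

lemma InGen.iterate_gammaS {s x : S.FaceS} (h : InGen S s x) (m : ℕ) :
    InGen S s ((_root_.gammaS S)^[m] x) := by
  induction m with
  | zero => exact h
  | succ m ih => rw [Function.iterate_succ_apply']; exact ih.gammaS

lemma InGen.gammaIter {s x : S.FaceS} (h : InGen S s x) (k : ℕ) :
    InGen S s (gammaIter S k x) :=
  h.iterate_gammaS _

instance PHg.finite_faceS_s5 (S : PHg) : Finite S.FaceS := by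
  obtain ⟨n, hn⟩ := S.bounded
  have hdim (x : S.FaceS) : x.1 < n + 1 := by
    by_contra hx
    exact (hn x.1 (by omega)).false x.2
  have := fun k : Fin (n + 1) => S.fin k
  refine Finite.of_injective
    (fun x : S.FaceS => (⟨⟨x.1, hdim x⟩, x.2⟩ : Σ k : Fin (n + 1), S.Face k)) ?_
  rintro ⟨k, a⟩ ⟨l, b⟩ hab
  obtain ⟨hkl, hab⟩ := Sigma.ext_iff.mp hab
  obtain rfl : k = l := congrArg Fin.val hkl
  simpa using hab

lemma IsOpetope.not_ltMinus_self (hS : IsOpetope S) (a : S.FaceS) : ¬ ltMinus S a a :=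
  fun h => hS.strict _ (Relation.TransGen.lift (gammaS S) (fun _ b hab => ⟨b, hab.2, rfl⟩) _ _ h)

lemma IsOpetope.wellFounded_covMinus_flip (hS : IsOpetope S) :
    WellFounded (flip (covMinus S)) := by
  have : IsTrans S.FaceS (flip (ltMinus S)) := ⟨fun _ _ _ h₁ h₂ => h₂.trans h₁⟩
  have : Std.Irrefl (flip (ltMinus S)) := ⟨hS.not_ltMinus_self⟩
  exact Subrelation.wf (r := flip (ltMinus S)) (fun hab => Relation.TransGen.single hab)
    (Finite.wellFounded_of_trans_of_irrefl _)

lemma IsOpetope.gammaS_eq_or_exists_inDelta (hS : IsOpetope S) {x y : S.FaceS}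
    (hyx : inDelta S y x) (hy : 0 < y.1) :
    gammaS S y = gammaS S (gammaS S x) ∨ ∃ w, inDelta S w x ∧ inDelta S (gammaS S y) w := by
  by_contra! hne
  have hmem : gammaS S y ∈ ({gammaS S (gammaS S x)} : Set S.FaceS) := by
    rw [hS.glob_gamma x (by have := inDelta_dim hyx; omega)]
    exact ⟨⟨y, hyx, rfl⟩, fun ⟨w, hwx, hyw⟩ => hne.2 w hwx hyw⟩
  exact hne.1 hmem

end Faces

namespace IotaMap

variable {Q P : PHg} (h : IotaMap Q P)

lemma map_gammaIter_dim_self (x : Q.FaceS) : h.f (gammaIter Q (h.f x).1 x) = h.f x := by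
  rw [h.gamma_pres, gammaIter_of_dim_le le_rfl]

lemma map_gammaS_of_dim_lt {y : Q.FaceS} (hy : (h.f y).1 < y.1) :
    h.f (gammaS Q y) = h.f y := by
  have := h.gamma_pres (y.1 - 1) y
  rwa [← iterate_gammaS_eq_gammaIter (by omega : 1 ≤ y.1), Function.iterate_one,
    gammaIter_of_dim_le (by omega)] at this

lemma eq_or_inDelta_map_of_dim_eq {x y : Q.FaceS} (hyx : inDelta Q y x)
    (hy : (h.f y).1 = y.1) : h.f y = h.f x ∨ inDelta P (h.f y) (h.f x) := by
  have hdim := inDelta_dim hyx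
  have hx := h.dim_le x
  rcases Nat.lt_trichotomy ((h.f x).1 + 1) x.1 with hlt | heq | hgt
  · exact absurd hy (h.dom_more x (by omega) y hyx).ne
  · exact .inl ((h.dom_one x heq).1 y hyx hy)
  · exact .inr ((h.dom_eq x (by omega) (by omega)).1 y hyx hy)

lemma exists_inDelta_map_eq {x : Q.FaceS} {z : P.FaceS} (hz : inDelta P z (h.f x)) :
    ∃ v, inDelta Q v (gammaIter Q (h.f x).1 x) ∧ h.f v = z := by
  have hx₀ := h.map_gammaIter_dim_self x
  have hdim : (gammaIter Q (h.f x).1 x).1 = (h.f x).1 := gammaIter_dim (h.dim_le x)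
  have hpos : 0 < (h.f x).1 := by have := inDelta_dim hz; omega
  obtain ⟨v, hv, -, rfl⟩ :=
    (h.dom_eq (gammaIter Q (h.f x).1 x) (by omega) (by rw [hx₀, hdim])).2.2 z (by rwa [hx₀])
  exact ⟨v, hv, rfl⟩

lemma mem_gen_map_iterate_gammaS {s : P.FaceS} {x : Q.FaceS} (hx : InGen P s (h.f x))
    {m : ℕ} (hm : m ≤ x.1) : InGen P s (h.f ((gammaS Q)^[m] x)) := by
  rw [iterate_gammaS_eq_gammaIter hm, h.gamma_pres]
  exact hx.gammaIter _

lemma mem_gen_map_of_inDelta (hQ : IsOpetope Q) {s : P.FaceS} {x y : Q.FaceS}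
    (hx : InGen P s (h.f x)) (hyx : inDelta Q y x) : InGen P s (h.f y) := by
  induction hn : x.1 using Nat.strong_induction_on generalizing x y with
  | _ n IHdim =>
    subst hn
    induction y using hQ.wellFounded_covMinus_flip.induction with
    | _ y IHminus =>
      by_cases hy : (h.f y).1 = y.1
      · rcases h.eq_or_inDelta_map_of_dim_eq hyx hy with heq | hδ
        · exact heq ▸ hx
        · exact hx.del hδ
      have hdrop : (h.f y).1 < y.1 := lt_of_le_of_ne (h.dim_le y) hy
      rw [← h.map_gammaS_of_dim_lt hdrop]
      rcases hQ.gammaS_eq_or_exists_inDelta hyx (by omega) with hγ | ⟨w, hwx, hyw⟩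
      · have := inDelta_dim hyx
        rw [hγ]
        exact h.mem_gen_map_iterate_gammaS hx (m := 2) (by omega)
      · exact IHdim _ (by have := inDelta_dim hwx; omega)
          (IHminus w ⟨by omega, hyw⟩ hwx) hyw rfl

lemma map_mem_gen (hQ : IsOpetope Q) {q x : Q.FaceS} (hx : InGen Q q x) :
    InGen P (h.f q) (h.f x) := by
  induction hx with
  | base => exact .base
  | gam _ hpos ih =>
      simpa using h.mem_gen_map_iterate_gammaS ih (m := 1) hpos
  | del _ hyx ih => exact h.mem_gen_map_of_inDelta hQ ih hyx

lemma exists_mem_gen_map_eq {q : Q.FaceS} {y : P.FaceS} (hy : InGen P (h.f q) y) :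
    ∃ x, InGen Q q x ∧ h.f x = y := by
  induction hy with
  | base => exact ⟨q, .base, rfl⟩
  | gam _ hpos ih =>
      obtain ⟨x, hx, rfl⟩ := ih
      refine ⟨gammaIter Q ((h.f x).1 - 1) x, hx.gammaIter _, ?_⟩
      rw [h.gamma_pres, ← iterate_gammaS_eq_gammaIter hpos, Function.iterate_one]
  | del _ hwz ih =>
      obtain ⟨x, hx, rfl⟩ := ih
      obtain ⟨v, hv, rfl⟩ := h.exists_inDelta_map_eq hwz
      exact ⟨v, (hx.gammaIter _).del hv, rfl⟩

end IotaMap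

theorem iota_image_of_generated_general
    (Q P : PHg) (hQ : IsOpetope Q) (h : IotaMap Q P)
    (q : Q.FaceS) :
    ∀ y : P.FaceS, (∃ x, InGen Q q x ∧ h.f x = y) ↔ InGen P (h.f q) y := by
  intro y
  constructor
  · rintro ⟨x, hx, rfl⟩
    exact h.map_mem_gen hQ hx
  · exact h.exists_mem_gen_map_eq

/-- For a contraction morphism `h : Q → P` and any face `q` of `Q`,
the image of `Q[q]` under `h` is exactly `P[h(q)]`. -/
theorem iota_image_of_generated
    (Q P : PHg) (hQ : IsOpetope Q) (hP : IsOpetope P) (h : IotaMap Q P)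
    (q : Q.FaceS) :
    ∀ y : P.FaceS, (∃ x, InGen Q q x ∧ h.f x = y) ↔ InGen P (h.f q) y :=
  iota_image_of_generated_general Q P hQ h q
end

section
/- Let P be a positive opetope. The flag order ◁ on the set Flags_P[x_m / 0) of flags under x_m (defined by comparing two distinct flags at the minimal level k where they differ: if k = 0 then x ◁ y iff y_0 <^+ x_0; if k > 0 and sgn([x_{k−1},…,x_0]) = +1 then x ◁ y iff x_k ≺_{x_{k−1}} y_k; if k > 0 and sgn([x_{k−1},…,x_0]) = −1 then x ◁ y iff y_k ≺_{x_{k−1}} x_k) is a strict linear order. -/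
open scoped Classical

/-- A restricted flag from dimension `m` down to dimension `l`,
encoded as a function `ℕ → S.FaceS` (entries outside `[l,m]` are irrelevant). -/
def IsRFlag (S : PHg) (m l : ℕ) (F : ℕ → S.FaceS) : Prop :=
  (∀ i, l ≤ i → i ≤ m → (F i).1 = i) ∧
  (∀ i, l ≤ i → i < m → inBoundary S (F i) (F (i+1)))

/-- The pencil order `≺ₓ` on the pencil over `x`. -/
def pencilLt (S : PHg) (x a b : S.FaceS) : Prop :=
  (inGammaS S x b ∧ inDelta S x a) ∨
  (inDelta S x a ∧ inDelta S x b ∧ ltPlus S a b) ∨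
  (inGammaS S x a ∧ inGammaS S x b ∧ ltPlus S b a)

/-- The sign of the flag segment `[F j, …, F l]`. -/
noncomputable def sgnSeg (S : PHg) (l : ℕ) (F : ℕ → S.FaceS) : ℕ → ℤ
  | 0 => 1
  | j+1 => if l ≤ j ∧ inDelta S (F j) (F (j+1)) then -(sgnSeg S l F j) else sgnSeg S l F j

/-- The flag order `◁` on flags from dimension `m` down to `l`. -/
def flagLt (S : PHg) (l m : ℕ) (F G : ℕ → S.FaceS) : Prop :=
  ∃ k, l ≤ k ∧ k ≤ m ∧ (∀ i, l ≤ i → i < k → F i = G i) ∧ F k ≠ G k ∧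
    ((k = 0 ∧ ltPlus S (G 0) (F 0)) ∨
     (0 < k ∧ sgnSeg S l F (k-1) = 1 ∧ pencilLt S (F (k-1)) (F k) (G k)) ∨
     (0 < k ∧ sgnSeg S l F (k-1) = -1 ∧ pencilLt S (F (k-1)) (G k) (F k)))

/-- `i` is the low level `ll` of the flag `F` (with top dimension `n`). -/
def LowLevelT (S : PHg) (n : ℕ) (F : ℕ → S.FaceS) (i : ℕ) : Prop :=
  i + 2 ≤ n ∧ inDelta S (F (i+1)) (F (i+2)) ∧
    ∀ j, i < j → j + 2 ≤ n → ¬ inDelta S (F (j+1)) (F (j+2))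

/-- Membership in `Flags[t / b]`, flags from top face `t` (dim `m`) to bottom face `b` (dim `l`). -/
def MemFlags (S : PHg) (l m : ℕ) (t b : S.FaceS) (F : ℕ → S.FaceS) : Prop :=
  IsRFlag S m l F ∧ F m = t ∧ F l = b

def EqOnFl {α : Type*} (l m : ℕ) (F G : ℕ → α) : Prop :=
  ∀ i, l ≤ i → i ≤ m → F i = G i

/-- `G` is the successor of `F` in `Flags[t / b]` with respect to the flag order. -/
def SuccFl (S : PHg) (l m : ℕ) (t b : S.FaceS) (F G : ℕ → S.FaceS) : Prop :=
  MemFlags S l m t b F ∧ MemFlags S l m t b G ∧ flagLt S l m F G ∧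
  ∀ H, MemFlags S l m t b H → flagLt S l m F H → (EqOnFl l m G H ∨ flagLt S l m G H)

/-!
Two distinct flags are compared at the lowest level `k` where they differ, and the comparison
there only involves faces strictly below `k`, on which the flags agree. Hence the flag order is
assembled from one strict linear order per level: the reversed upper order `<⁺` on vertices for
`k = 0`, and for `k > 0` the pencil order over the common face `x_{k-1}`, reversed when the sign
of `[x_{k-1}, …, x_0]` is negative. Pencil linearity makes each of these a strict linear order,
and lexicographic comparison of such orders is again a strict linear order.
-/

variable {S : PHg}

section Pencil

theorem not_inGammaS_and_inDelta (hS : IsOpetope S) {x a : S.FaceS}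
    (hγ : inGammaS S x a) (hδ : inDelta S x a) : False :=
  hS.strict x (.single ⟨a, hδ, hγ.2⟩)

theorem pencilLt_irrefl (hS : IsOpetope S) {x a : S.FaceS} : ¬ pencilLt S x a a := by
  rintro (⟨hγ, hδ⟩ | ⟨-, -, h⟩ | ⟨-, -, h⟩)
  · exact not_inGammaS_and_inDelta hS hγ hδ
  all_goals exact hS.strict a h

theorem pencilLt_trans (hS : IsOpetope S) {x a b c : S.FaceS}
    (hab : pencilLt S x a b) (hbc : pencilLt S x b c) : pencilLt S x a c := by
  rcases hab with ⟨hγb, hδa⟩ | ⟨hδa, hδb, hab⟩ | ⟨hγa, hγb, hab⟩ <;>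
    rcases hbc with ⟨hγc, hδb'⟩ | ⟨hδb', hδc, hbc⟩ | ⟨hγb', hγc, hbc⟩
  all_goals first
    | exact (not_inGammaS_and_inDelta hS ‹inGammaS S x b› ‹inDelta S x b›).elim
    | skip
  · exact .inl ⟨hγc, hδa⟩
  · exact .inl ⟨hγc, hδa⟩
  · exact .inr (.inl ⟨hδa, hδc, hab.trans hbc⟩)
  · exact .inr (.inr ⟨hγa, hγc, hbc.trans hab⟩)

theorem pencilLt_trichotomous (hS : IsOpetope S) {x a b : S.FaceS}
    (ha : inBoundary S x a) (hb : inBoundary S x b) :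
    a = b ∨ pencilLt S x a b ∨ pencilLt S x b a := by
  rcases ha with ha | ha <;> rcases hb with hb | hb
  · rcases hS.pencil_gamma x a b ha hb with h | h | h
    · exact .inl h
    · exact .inr (.inr (.inr (.inr ⟨hb, ha, h⟩)))
    · exact .inr (.inl (.inr (.inr ⟨ha, hb, h⟩)))
  · exact .inr (.inr (.inl ⟨ha, hb⟩))
  · exact .inr (.inl (.inl ⟨hb, ha⟩))
  · rcases hS.pencil_delta x a b ha hb with h | h | h
    · exact .inl h
    · exact .inr (.inl (.inr (.inl ⟨ha, hb, h⟩)))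
    · exact .inr (.inr (.inr (.inl ⟨hb, ha, h⟩)))

end Pencil

section Sign

theorem sgnSeg_eq_one_or_neg_one (l : ℕ) (F : ℕ → S.FaceS) :
    ∀ j, sgnSeg S l F j = 1 ∨ sgnSeg S l F j = -1
  | 0 => .inl rfl
  | j + 1 => by
    rcases sgnSeg_eq_one_or_neg_one l F j with h | h <;>
      · simp only [sgnSeg, h]
        split <;> simp

theorem sgnSeg_congr (l : ℕ) {F G : ℕ → S.FaceS} :
    ∀ j, (∀ i ≤ j, F i = G i) → sgnSeg S l F j = sgnSeg S l G j
  | 0, _ => rfl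
  | j + 1, h => by
    simp only [sgnSeg, h j j.le_succ, h (j + 1) le_rfl,
      sgnSeg_congr l j fun i hi => h i (hi.trans j.le_succ)]

end Sign

section LevelOrder

/-- The comparison of the `k`-th faces of two flags that agree with `F` below `k`. -/
noncomputable def levelLt (S : PHg) (F : ℕ → S.FaceS) : ℕ → S.FaceS → S.FaceS → Prop
  | 0, a, b => ltPlus S b a
  | j + 1, a, b => if sgnSeg S 0 F j = 1 then pencilLt S (F j) a b else pencilLt S (F j) b a

theorem levelLt_iff {F G : ℕ → S.FaceS} {k : ℕ} :
    levelLt S F k (F k) (G k) ↔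
      (k = 0 ∧ ltPlus S (G 0) (F 0)) ∨
      (0 < k ∧ sgnSeg S 0 F (k - 1) = 1 ∧ pencilLt S (F (k - 1)) (F k) (G k)) ∨
      (0 < k ∧ sgnSeg S 0 F (k - 1) = -1 ∧ pencilLt S (F (k - 1)) (G k) (F k)) := by
  cases k with
  | zero => simp [levelLt]
  | succ j => rcases sgnSeg_eq_one_or_neg_one 0 F j with h | h <;> simp [levelLt, h]

theorem levelLt_irrefl (hS : IsOpetope S) {F : ℕ → S.FaceS} {k : ℕ} {a : S.FaceS} :
    ¬ levelLt S F k a a := by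
  cases k with
  | zero => exact hS.strict a
  | succ j => simp only [levelLt]; split_ifs <;> exact pencilLt_irrefl hS

theorem levelLt_trans (hS : IsOpetope S) {F : ℕ → S.FaceS} {k : ℕ} {a b c : S.FaceS}
    (hab : levelLt S F k a b) (hbc : levelLt S F k b c) : levelLt S F k a c := by
  cases k with
  | zero => exact Relation.TransGen.trans hbc hab
  | succ j =>
    simp only [levelLt] at *
    split_ifs at *
    · exact pencilLt_trans hS hab hbc
    · exact pencilLt_trans hS hbc hab

theorem levelLt_congr {F G : ℕ → S.FaceS} {k : ℕ} (h : ∀ i < k, F i = G i) :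
    levelLt S F k = levelLt S G k := by
  cases k with
  | zero => rfl
  | succ j =>
    have hsgn := sgnSeg_congr 0 j fun i hi => h i (Nat.lt_succ_of_le hi)
    funext a b
    simp only [levelLt, hsgn, h j j.lt_succ_self]

theorem levelLt_trichotomous (hS : IsOpetope S) {m k : ℕ} {F G : ℕ → S.FaceS}
    (hF : IsRFlag S m 0 F) (hG : IsRFlag S m 0 G) (hk : k ≤ m) (h : ∀ i < k, F i = G i) :
    F k = G k ∨ levelLt S F k (F k) (G k) ∨ levelLt S F k (G k) (F k) := by
  cases k with
  | zero =>
    rcases hS.linear0 (F 0) (G 0) (hF.1 0 le_rfl hk) (hG.1 0 le_rfl hk) with h | h | h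
    · exact .inl h
    · exact .inr (.inr h)
    · exact .inr (.inl h)
  | succ j =>
    have hbF : inBoundary S (F j) (F (j + 1)) := hF.2 j j.zero_le hk
    have hbG : inBoundary S (F j) (G (j + 1)) := h j j.lt_succ_self ▸ hG.2 j j.zero_le hk
    simp only [levelLt]
    split_ifs
    · exact pencilLt_trichotomous hS hbF hbG
    · exact (pencilLt_trichotomous hS hbF hbG).imp_right Or.symm

end LevelOrder

section FlagOrder

theorem flagLt_iff (hS : IsOpetope S) {m : ℕ} {F G : ℕ → S.FaceS} :
    flagLt S 0 m F G ↔ ∃ k ≤ m, (∀ i < k, F i = G i) ∧ levelLt S F k (F k) (G k) := by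
  constructor
  · rintro ⟨k, -, hk, h, -, hlt⟩
    exact ⟨k, hk, fun i => h i i.zero_le, levelLt_iff.2 hlt⟩
  · rintro ⟨k, hk, h, hlt⟩
    exact ⟨k, k.zero_le, hk, fun i _ => h i, fun he => levelLt_irrefl hS (he ▸ hlt),
      levelLt_iff.1 hlt⟩

theorem flagLt_irrefl {l m : ℕ} {F : ℕ → S.FaceS} : ¬ flagLt S l m F F :=
  fun ⟨_, _, _, _, hne, _⟩ => hne rfl

theorem flagLt_trans (hS : IsOpetope S) {m : ℕ} {F G H : ℕ → S.FaceS}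
    (hFG : flagLt S 0 m F G) (hGH : flagLt S 0 m G H) : flagLt S 0 m F H := by
  rw [flagLt_iff hS] at *
  obtain ⟨k₁, hk₁, hFG, h₁⟩ := hFG
  obtain ⟨k₂, hk₂, hGH, h₂⟩ := hGH
  rcases lt_trichotomy k₁ k₂ with hlt | rfl | hgt
  · refine ⟨k₁, hk₁, fun i hi => (hFG i hi).trans (hGH i (hi.trans hlt)), ?_⟩
    rwa [← hGH k₁ hlt]
  · refine ⟨k₁, hk₁, fun i hi => (hFG i hi).trans (hGH i hi), levelLt_trans hS h₁ ?_⟩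
    rwa [levelLt_congr hFG]
  · refine ⟨k₂, hk₂, fun i hi => (hFG i (hi.trans hgt)).trans (hGH i hi), ?_⟩
    rwa [levelLt_congr fun i hi => hFG i (hi.trans hgt), hFG k₂ hgt]

theorem flagLt_total (hS : IsOpetope S) {m : ℕ} {F G : ℕ → S.FaceS}
    (hF : IsRFlag S m 0 F) (hG : IsRFlag S m 0 G) :
    EqOnFl 0 m F G ∨ flagLt S 0 m F G ∨ flagLt S 0 m G F := by
  by_cases hdiff : ∃ k ≤ m, F k ≠ G k
  · obtain ⟨hk, hne⟩ := Nat.find_spec hdiff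
    have h : ∀ i < Nat.find hdiff, F i = G i := fun i hi => by
      simpa [(hi.trans_le hk).le] using Nat.find_min hdiff hi
    rw [flagLt_iff hS, flagLt_iff hS]
    rcases levelLt_trichotomous hS hF hG hk h with heq | hlt | hgt
    · exact absurd heq hne
    · exact .inr (.inl ⟨_, hk, h, hlt⟩)
    · exact .inr (.inr ⟨_, hk, fun i hi => (h i hi).symm, levelLt_congr h ▸ hgt⟩)
  · push Not at hdiff
    exact .inl fun i _ hi => hdiff i hi

end FlagOrder

theorem flag_order_strict_linear_general
    (S : PHg) (hS : IsOpetope S) (m : ℕ) (t : S.FaceS) :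
    (∀ F, IsRFlag S m 0 F → F m = t → ¬ flagLt S 0 m F F) ∧
    (∀ F G H, IsRFlag S m 0 F → F m = t → IsRFlag S m 0 G → G m = t →
      IsRFlag S m 0 H → H m = t →
      flagLt S 0 m F G → flagLt S 0 m G H → flagLt S 0 m F H) ∧
    (∀ F G, IsRFlag S m 0 F → F m = t → IsRFlag S m 0 G → G m = t →
      EqOnFl 0 m F G ∨ flagLt S 0 m F G ∨ flagLt S 0 m G F) :=
  ⟨fun _ _ _ => flagLt_irrefl,
    fun _ _ _ _ _ _ _ _ _ => flagLt_trans hS,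
    fun _ _ hF _ hG _ => flagLt_total hS hF hG⟩

/-- The flag order `◁` is a strict linear order on the set
`Flags_P[x_m / 0)` of flags under a face `x_m` of a positive opetope. -/
theorem flag_order_strict_linear
    (S : PHg) (hS : IsOpetope S) (m : ℕ) (t : S.FaceS) (ht : t.1 = m) :
    (∀ F, IsRFlag S m 0 F → F m = t → ¬ flagLt S 0 m F F) ∧
    (∀ F G H, IsRFlag S m 0 F → F m = t → IsRFlag S m 0 G → G m = t →
      IsRFlag S m 0 H → H m = t →
      flagLt S 0 m F G → flagLt S 0 m G H → flagLt S 0 m F H) ∧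
    (∀ F G, IsRFlag S m 0 F → F m = t → IsRFlag S m 0 G → G m = t →
      EqOnFl 0 m F G ∨ flagLt S 0 m F G ∨ flagLt S 0 m G F) :=
  flag_order_strict_linear_general S hS m t
end
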